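/- arXiv:1610.01860 — 3 statements merged into one kernel-verified Lean document; each statement's English description precedes it below -/
import Mathlib

section
/- If a 3×3 real matrix E can be written as E = R₁ [t]_× R₂ with R₁, R₂ ∈ SO(3) and t ∈ R³ (i.e., E is an essential matrix, equivalently E has two equal singular values and one zero singular value), then 2 E Eᵀ E − trace(E Eᵀ) E = 0 and det(E) = 0. -/
/-- The skew-symmetric matrix `[t]_×` associated to `t ∈ ℝ³`, so that `[t]_× v = t × v`. -/
def crossMatrix (t : Fin 3 → ℝ) : Matrix (Fin 3) (Fin 3) ℝ :=
  !![0, -t 2, t 1;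
     t 2, 0, -t 0;
     -t 1, t 0, 0]

lemma crossMatrix_transpose (t : Fin 3 → ℝ) :
    (crossMatrix t).transpose = !![0, t 2, -t 1; -t 2, 0, t 0; t 1, -t 0, 0] := by
  ext i j
  fin_cases i <;> fin_cases j <;> simp [crossMatrix]

lemma crossMatrix_trace (t : Fin 3 → ℝ) :
    (crossMatrix t * (crossMatrix t).transpose).trace = 2 * (t 0 ^ 2 + t 1 ^ 2 + t 2 ^ 2) := by
  rw [crossMatrix_transpose]
  simp [Matrix.trace_fin_three, crossMatrix, Matrix.mul_apply, Fin.sum_univ_succ]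
  ring

lemma crossMatrix_key (t : Fin 3 → ℝ) :
    (2 : ℝ) • (crossMatrix t * (crossMatrix t).transpose * crossMatrix t) =
      (crossMatrix t * (crossMatrix t).transpose).trace • crossMatrix t := by
  rw [crossMatrix_trace, crossMatrix_transpose,
    show crossMatrix t = !![0, -t 2, t 1; t 2, 0, -t 0; -t 1, t 0, 0] from rfl,
    Matrix.mul_fin_three, Matrix.mul_fin_three]
  ext i j
  fin_cases i <;> fin_cases j <;>
    · simp [Matrix.smul_apply]
      ring

lemma crossMatrix_det (t : Fin 3 → ℝ) : (crossMatrix t).det = 0 := by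
  simp [crossMatrix, Matrix.det_fin_three]; ring

/-- If `E = R₁ [t]_× R₂` with `R₁, R₂ ∈ SO(3)` and `t ∈ ℝ³` (i.e. `E` is an essential
matrix), then `E` satisfies the Demazure equations `2 E Eᵀ E − trace(E Eᵀ) E = 0`
and `det E = 0`. -/
theorem essential_demazure (R₁ R₂ : Matrix (Fin 3) (Fin 3) ℝ) (t : Fin 3 → ℝ)
    (hR₁ : R₁.transpose * R₁ = 1) (hdR₁ : R₁.det = 1)
    (hR₂ : R₂.transpose * R₂ = 1) (hdR₂ : R₂.det = 1)
    (E : Matrix (Fin 3) (Fin 3) ℝ) (hE : E = R₁ * crossMatrix t * R₂) :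
    (2 : ℝ) • (E * E.transpose * E) - (E * E.transpose).trace • E = 0 ∧ E.det = 0 := by
  have hR₁' : R₁ * R₁.transpose = 1 := mul_eq_one_comm.mp hR₁
  have hR₂' : R₂ * R₂.transpose = 1 := mul_eq_one_comm.mp hR₂
  set T := crossMatrix t with hT
  have hEEt : E * E.transpose = R₁ * (T * T.transpose) * R₁.transpose := by
    subst hE
    simp only [Matrix.transpose_mul, mul_assoc]
    rw [← mul_assoc R₂, hR₂', one_mul]
  have htr : (E * E.transpose).trace = (T * T.transpose).trace := by
    rw [hEEt, Matrix.trace_mul_cycle, ← mul_assoc, hR₁, one_mul]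
  constructor
  · have : E * E.transpose * E = R₁ * (T * T.transpose * T) * R₂ := by
      rw [hEEt, hE]
      simp only [mul_assoc]
      rw [← mul_assoc R₁.transpose, hR₁, one_mul]
    rw [this, htr, sub_eq_zero, hE]
    have key := crossMatrix_key t
    calc (2 : ℝ) • (R₁ * (T * T.transpose * T) * R₂)
        = R₁ * ((2 : ℝ) • (T * T.transpose * T)) * R₂ := by
          simp [Matrix.mul_smul, Matrix.smul_mul]
      _ = R₁ * ((T * T.transpose).trace • T) * R₂ := by rw [key]
      _ = (T * T.transpose).trace • (R₁ * T * R₂) := by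
          simp [Matrix.mul_smul, Matrix.smul_mul, mul_assoc]
  · rw [hE, Matrix.det_mul, Matrix.det_mul, crossMatrix_det, hdR₂]
    ring
end

section
/- Let X = (x_{ij}) be a generic complex 3×3 matrix of rank 2 such that diag(f,f,1)·X is an essential matrix for some nonzero f ∈ C. Then f² = (x₂₃x₃₁² + x₂₃x₃₂² − 2x₂₁x₃₁x₃₃ − 2x₂₂x₃₂x₃₃ − x₂₃x₃₃²) / (2x₁₁x₁₃x₂₁ + 2x₁₂x₁₃x₂₂ − x₁₁²x₂₃ − x₁₂²x₂₃ + x₁₃²x₂₃ + x₂₁²x₂₃ + x₂₂²x₂₃ + x₂₃³), provided the denominator is nonzero. -/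
/-- A `3×3` complex matrix is essential if it satisfies the Demazure equations. -/
def IsEssential (E : Matrix (Fin 3) (Fin 3) ℂ) : Prop :=
  E.det = 0 ∧ (2 : ℂ) • (E * E.transpose * E) - (E * E.transpose).trace • E = 0

/-- The diagonal matrix `diag(f, f, 1)`. -/
def diagF (f : ℂ) : Matrix (Fin 3) (Fin 3) ℂ :=
  Matrix.diagonal ![f, f, 1]

/-- Focal length formula: if `X = (x_{ij})` has rank `2` and `diag(f,f,1)·X` is essential
for some `f ≠ 0`, then (provided the denominator is nonzero)
`f² = (x₂₃x₃₁² + x₂₃x₃₂² − 2x₂₁x₃₁x₃₃ − 2x₂₂x₃₂x₃₃ − x₂₃x₃₃²) /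
(2x₁₁x₁₃x₂₁ + 2x₁₂x₁₃x₂₂ − x₁₁²x₂₃ − x₁₂²x₂₃ + x₁₃²x₂₃ + x₂₁²x₂₃ + x₂₂²x₂₃ + x₂₃³)`.
(Indices are shifted by one: `x₁₁ = x 0 0`.) -/
theorem focal_length_formula (x : Matrix (Fin 3) (Fin 3) ℂ) (f : ℂ)
    (hrank : x.rank = 2) (hf : f ≠ 0) (hE : IsEssential (diagF f * x))
    (hden : 2 * x 0 0 * x 0 2 * x 1 0 + 2 * x 0 1 * x 0 2 * x 1 1
        - x 0 0 ^ 2 * x 1 2 - x 0 1 ^ 2 * x 1 2 + x 0 2 ^ 2 * x 1 2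
        + x 1 0 ^ 2 * x 1 2 + x 1 1 ^ 2 * x 1 2 + x 1 2 ^ 3 ≠ 0) :
    f ^ 2 =
      (x 1 2 * x 2 0 ^ 2 + x 1 2 * x 2 1 ^ 2 - 2 * x 1 0 * x 2 0 * x 2 2
        - 2 * x 1 1 * x 2 1 * x 2 2 - x 1 2 * x 2 2 ^ 2) /
      (2 * x 0 0 * x 0 2 * x 1 0 + 2 * x 0 1 * x 0 2 * x 1 1
        - x 0 0 ^ 2 * x 1 2 - x 0 1 ^ 2 * x 1 2 + x 0 2 ^ 2 * x 1 2
        + x 1 0 ^ 2 * x 1 2 + x 1 1 ^ 2 * x 1 2 + x 1 2 ^ 3) := by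
  obtain ⟨-, h⟩ := hE
  have h12 := congrFun (congrFun h 1) 2
  simp [diagF, Matrix.mul_apply, Matrix.trace, Matrix.diag, Fin.sum_univ_three,
    Matrix.diagonal, Matrix.transpose_apply] at h12
  rw [eq_div_iff hden]
  have key : f * (f ^ 2 *
      (2 * x 0 0 * x 0 2 * x 1 0 + 2 * x 0 1 * x 0 2 * x 1 1
        - x 0 0 ^ 2 * x 1 2 - x 0 1 ^ 2 * x 1 2 + x 0 2 ^ 2 * x 1 2
        + x 1 0 ^ 2 * x 1 2 + x 1 1 ^ 2 * x 1 2 + x 1 2 ^ 3)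
      - (x 1 2 * x 2 0 ^ 2 + x 1 2 * x 2 1 ^ 2 - 2 * x 1 0 * x 2 0 * x 2 2
        - 2 * x 1 1 * x 2 1 * x 2 2 - x 1 2 * x 2 2 ^ 2)) = 0 := by
    linear_combination h12
  rcases mul_eq_zero.mp key with h0 | h0
  · exact absurd h0 hf
  · linear_combination h0
end

section
/- Let X = {p} be a single point in P² with u = (1,2,3). Then the distortion variety X_{[u]} is a rational curve in P⁸, and if the last coordinate c of p is nonzero, then X_{[u]} has degree 3 (it is a rational normal cubic curve in a P³). -/
open MvPolynomial

/-- The distortion vector `u = (1, 2, 3)` on `ℙ²`. -/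
def u123 : Fin 3 → ℕ := ![1, 2, 3]

/-- Index type for the `9` coordinates of `ℙ⁸`. -/
abbrev DIdx := (j : Fin 3) × Fin (u123 j + 1)

/-- The distortion map `(a,b,c,λ) ↦ (a : aλ : b : bλ : bλ² : c : cλ : cλ² : cλ³)`. -/
def distMap : (Fin 3 → ℂ) → ℂ → (DIdx → ℂ) :=
  fun x lam c => x c.1 * lam ^ (c.2 : ℕ)

/-- The Zariski closure of a subset of affine space. -/
def zClosure {σ : Type*} (S : Set (σ → ℂ)) : Set (σ → ℂ) :=
  {z | ∀ Q : MvPolynomial σ ℂ, (∀ w ∈ S, eval w Q = 0) → eval z Q = 0}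

/-- `hasDegree m V k` : the affine cone `V` over a projective variety of dimension `m`
has degree `k` (generic linear sections, with one affine normalization, meet `V` in
exactly `k` points). -/
def hasDegree {σ : Type*} [Fintype σ] (m : ℕ) (V : Set (σ → ℂ)) (k : ℕ) : Prop :=
  ∃ G : MvPolynomial (Fin (m + 1) × σ) ℂ, G ≠ 0 ∧
    ∀ α : Fin (m + 1) → σ → ℂ,
      eval (fun q => α q.1 q.2) G ≠ 0 →
      Set.ncard {z | z ∈ V ∧ (∑ c, α 0 c * z c) = 1 ∧
        ∀ i : Fin (m + 1), i ≠ 0 → (∑ c, α i c * z c) = 0} = k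

/-- The affine cone over the distortion variety `X_{[u]} ⊂ ℙ⁸` of the single point
`X = {(a₀ : b₀ : c₀)} ⊂ ℙ²`: the closure of all scalar multiples of the curve
`λ ↦ (a₀ : a₀λ : b₀ : b₀λ : b₀λ² : c₀ : c₀λ : c₀λ² : c₀λ³)`. -/
def ptDist (p : Fin 3 → ℂ) : Set (DIdx → ℂ) :=
  zClosure {w | ∃ t lam : ℂ, w = t • distMap p lam}


/-! The cone `ptDist p` is the image, under the injective linear map
`distLin p : ℂ⁴ → ℂ⁹, y ↦ (p_j * y_i)`, of the cone over the twisted cubic `(1 : λ : λ² : λ³)`: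
its linear and quadratic equations hold on `ptDist p` and force every point to be a multiple of
`distMap p λ` or of the point at infinity; the range of `distLin p` is the `ℙ³`.
A linear form on `ℂ⁹` restricts along `λ ↦ distMap p λ` to a cubic in `λ`, so a pair of linear
sections cuts out the points over the roots of one cubic, normalized by the value of another.
When the first cubic has three simple roots, none shared with the second, there are exactly three
such points, and this genericity is the nonvanishing of a polynomial in the coefficients of the
forms. -/

open Polynomial in
theorem Polynomial.resultant_eq_zero_of_isRoot {R : Type*} [CommRing R] {f g : R[X]} {m n : ℕ}
    (hf : f.natDegree ≤ m) (hg : g.natDegree ≤ n) (hmn : m ≠ 0 ∨ n ≠ 0) {x : R}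
    (hfx : f.IsRoot x) (hgx : g.IsRoot x) : f.resultant g m n = 0 := by
  obtain ⟨a, b, -, -, h⟩ := exists_mul_add_mul_eq_C_resultant f g hf hg hmn
  simpa [hfx.eq_zero, hgx.eq_zero] using (congrArg (eval x) h).symm

theorem Cubic.discr_map {R S : Type*} [CommRing R] [CommRing S] (φ : R →+* S) (P : Cubic R) :
    (P.map φ).discr = φ P.discr := by
  simp [Cubic.discr, Cubic.map, map_ofNat]

theorem Cubic.ncard_setOf_isRoot {K : Type*} [Field K] [IsAlgClosed K] {P : Cubic K}
    (ha : P.a ≠ 0) (hdisc : P.discr ≠ 0) : {x | P.toPoly.IsRoot x}.ncard = 3 := by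
  classical
  have hroots : {x | P.toPoly.IsRoot x} = ↑P.roots.toFinset := by
    ext x
    simp [Cubic.roots, Polynomial.mem_roots (Cubic.ne_zero_of_a_ne_zero ha)]
  rw [hroots, Set.ncard_coe_finset]
  exact Cubic.card_roots_of_discr_ne_zero (φ := RingHom.id K) ha (IsAlgClosed.splits _) hdisc

theorem twisted_cubic_cone_cases {K : Type*} [Field K] {w : Fin 4 → K}
    (h02 : w 0 * w 2 = w 1 * w 1) (h03 : w 0 * w 3 = w 1 * w 2) (h13 : w 1 * w 3 = w 2 * w 2) :
    (∃ t μ : K, w = t • fun i : Fin 4 => μ ^ (i : ℕ)) ∨ ∃ s : K, w = s • ![0, 0, 0, 1] := by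
  by_cases h0 : w 0 = 0
  · right
    have h1 : w 1 = 0 := mul_self_eq_zero.mp (by rw [← h02, h0, zero_mul])
    have h2 : w 2 = 0 := mul_self_eq_zero.mp (by rw [← h13, h1, zero_mul])
    refine ⟨w 3, funext fun i => ?_⟩
    fin_cases i <;> simp [h0, h1, h2]
  · left
    refine ⟨w 0, w 1 / w 0, funext fun i => ?_⟩
    fin_cases i <;> simp <;> field_simp
    · linear_combination h02
    · linear_combination w 0 * h03 + w 1 * h02

-- Nonvanishing says that `P` has degree `3` and three simple roots, none of them a root of `Q`.
noncomputable def genericity {R : Type*} [CommRing R] (P Q : Cubic R) : R :=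
  P.a * P.discr * P.toPoly.resultant Q.toPoly 3 3

theorem map_genericity {R S : Type*} [CommRing R] [CommRing S] (φ : R →+* S) (P Q : Cubic R) :
    φ (genericity P Q) = genericity (P.map φ) (Q.map φ) := by
  rw [genericity, genericity, Cubic.map_toPoly, Cubic.map_toPoly, Polynomial.resultant_map_map,
    Cubic.discr_map, map_mul, map_mul]
  rfl

def DIdx.exponent (d : DIdx) : Fin 4 :=
  Fin.castLE (by fin_cases d <;> decide) d.2

@[simp]
theorem DIdx.val_exponent (d : DIdx) : (d.exponent : ℕ) = d.2 := rfl

@[simp]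
theorem DIdx.exponent_mk_two (i : Fin 4) : DIdx.exponent ⟨2, i⟩ = i := rfl

def distLin (p : Fin 3 → ℂ) : (Fin 4 → ℂ) →ₗ[ℂ] DIdx → ℂ :=
  LinearMap.pi fun d => p d.1 • LinearMap.proj d.exponent

@[simp]
theorem distLin_apply (p : Fin 3 → ℂ) (y : Fin 4 → ℂ) (d : DIdx) :
    distLin p y d = p d.1 * y d.exponent := rfl

theorem distMap_eq_distLin (p : Fin 3 → ℂ) (lam : ℂ) :
    distMap p lam = distLin p fun i => lam ^ (i : ℕ) := rfl

theorem distLin_injective {p : Fin 3 → ℂ} (hp : p 2 ≠ 0) : Function.Injective (distLin p) := by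
  intro y y' h
  funext i
  simpa [hp] using congrFun h ⟨2, i⟩

theorem finrank_range_distLin {p : Fin 3 → ℂ} (hp : p 2 ≠ 0) :
    Module.finrank ℂ (LinearMap.range (distLin p)) = 4 := by
  rw [LinearMap.finrank_range_of_inj (distLin_injective hp), Module.finrank_fin_fun]

theorem smul_distMap_mem_ptDist (p : Fin 3 → ℂ) (t lam : ℂ) : t • distMap p lam ∈ ptDist p :=
  fun _ hQ => hQ _ ⟨t, lam, rfl⟩

theorem mul_apply_eq_of_mem_ptDist {p : Fin 3 → ℂ} {z : DIdx → ℂ} (hz : z ∈ ptDist p)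
    (d : DIdx) : p 2 * z d = p d.1 * z ⟨2, d.exponent⟩ := by
  have hQ := hz (C (p 2) * X d - C (p d.1) * X ⟨2, d.exponent⟩) <| by
    rintro _ ⟨t, lam, rfl⟩
    simp only [map_sub, map_mul, eval_C, eval_X, distMap_eq_distLin, Pi.smul_apply, smul_eq_mul,
      distLin_apply, DIdx.exponent_mk_two]
    ring
  simpa [sub_eq_zero] using hQ

theorem mul_apply_eq_mul_apply_of_mem_ptDist {p : Fin 3 → ℂ} {z : DIdx → ℂ} (hz : z ∈ ptDist p)
    {i j k l : Fin 4} (h : (i : ℕ) + j = k + l) :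
    z ⟨2, i⟩ * z ⟨2, j⟩ = z ⟨2, k⟩ * z ⟨2, l⟩ := by
  have hQ := hz (X ⟨2, i⟩ * X ⟨2, j⟩ - X ⟨2, k⟩ * X ⟨2, l⟩) <| by
    rintro _ ⟨t, lam, rfl⟩
    simp only [map_sub, map_mul, eval_X, distMap, Pi.smul_apply, smul_eq_mul]
    linear_combination t ^ 2 * p 2 ^ 2 * congrArg (lam ^ ·) h
  simpa [sub_eq_zero] using hQ

theorem eq_distLin_of_mem_ptDist {p : Fin 3 → ℂ} (hp : p 2 ≠ 0) {z : DIdx → ℂ}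
    (hz : z ∈ ptDist p) : z = (p 2)⁻¹ • distLin p fun i => z ⟨2, i⟩ := by
  funext d
  rw [Pi.smul_apply, distLin_apply, ← mul_apply_eq_of_mem_ptDist hz, smul_eq_mul,
    inv_mul_cancel_left₀ hp]

theorem ptDist_subset_range_distLin {p : Fin 3 → ℂ} (hp : p 2 ≠ 0) :
    ptDist p ⊆ LinearMap.range (distLin p) := fun z hz => by
  rw [eq_distLin_of_mem_ptDist hp hz, ← map_smul]
  exact LinearMap.mem_range_self _ _

theorem mem_ptDist_cases {p : Fin 3 → ℂ} (hp : p 2 ≠ 0) {z : DIdx → ℂ} (hz : z ∈ ptDist p) :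
    (∃ t lam : ℂ, z = t • distMap p lam) ∨ ∃ s : ℂ, z = s • distLin p ![0, 0, 0, 1] := by
  rcases twisted_cubic_cone_cases (w := fun i => z ⟨2, i⟩)
      (mul_apply_eq_mul_apply_of_mem_ptDist hz (i := 0) (j := 2) (k := 1) (l := 1) rfl)
      (mul_apply_eq_mul_apply_of_mem_ptDist hz (i := 0) (j := 3) (k := 1) (l := 2) rfl)
      (mul_apply_eq_mul_apply_of_mem_ptDist hz (i := 1) (j := 3) (k := 2) (l := 2) rfl)
    with ⟨t, lam, hw⟩ | ⟨s, hw⟩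
  · refine .inl ⟨(p 2)⁻¹ * t, lam, ?_⟩
    rw [eq_distLin_of_mem_ptDist hp hz, hw, map_smul, smul_smul, distMap_eq_distLin]
  · refine .inr ⟨(p 2)⁻¹ * s, ?_⟩
    rw [eq_distLin_of_mem_ptDist hp hz, hw, map_smul, smul_smul]

-- The restriction `λ ↦ ∑ d, a d * distMap p λ d` (see `sum_mul_smul_distMap`), written over any
-- ring so that it can be taken of the universal linear forms.
def sectionCubic {R : Type*} [CommRing R] (p : Fin 3 → R) (a : DIdx → R) : Cubic R where
  a := a ⟨2, 3⟩ * p 2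
  b := a ⟨1, 2⟩ * p 1 + a ⟨2, 2⟩ * p 2
  c := a ⟨0, 1⟩ * p 0 + a ⟨1, 1⟩ * p 1 + a ⟨2, 1⟩ * p 2
  d := a ⟨0, 0⟩ * p 0 + a ⟨1, 0⟩ * p 1 + a ⟨2, 0⟩ * p 2

theorem map_sectionCubic {R S : Type*} [CommRing R] [CommRing S] (φ : R →+* S)
    (p : Fin 3 → R) (a : DIdx → R) :
    (sectionCubic p a).map φ = sectionCubic (φ ∘ p) (φ ∘ a) := by
  ext <;> simp [Cubic.map, sectionCubic]

theorem DIdx.sum_eq {M : Type*} [AddCommMonoid M] (f : DIdx → M) :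
    ∑ d, f d = f ⟨0, 0⟩ + (f ⟨0, 1⟩ + (f ⟨1, 0⟩ + (f ⟨1, 1⟩ + (f ⟨1, 2⟩
      + (f ⟨2, 0⟩ + (f ⟨2, 1⟩ + (f ⟨2, 2⟩ + (f ⟨2, 3⟩ + 0)))))))) := rfl

theorem sum_mul_distLin (p : Fin 3 → ℂ) (a : DIdx → ℂ) (w : Fin 4 → ℂ) :
    ∑ d, a d * distLin p w d = (sectionCubic p a).a * w 3 + (sectionCubic p a).b * w 2
      + (sectionCubic p a).c * w 1 + (sectionCubic p a).d * w 0 := by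
  rw [DIdx.sum_eq]
  simp only [distLin_apply, sectionCubic]
  ring!

theorem sum_mul_smul_distMap (p : Fin 3 → ℂ) (a : DIdx → ℂ) (t lam : ℂ) :
    ∑ d, a d * (t • distMap p lam) d = t * (sectionCubic p a).toPoly.eval lam := by
  simp only [Pi.smul_apply, smul_eq_mul, mul_left_comm _ t, ← Finset.mul_sum, distMap_eq_distLin,
    sum_mul_distLin, Cubic.toPoly]
  simp

theorem sum_mul_smul_distLin_top (p : Fin 3 → ℂ) (a : DIdx → ℂ) (s : ℂ) :
    ∑ d, a d * (s • distLin p ![0, 0, 0, 1]) d = s * (sectionCubic p a).a := by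
  simp only [Pi.smul_apply, smul_eq_mul, mul_left_comm _ s, ← Finset.mul_sum, sum_mul_distLin]
  simp

noncomputable def genericityPoly (p : Fin 3 → ℂ) : MvPolynomial (Fin 2 × DIdx) ℂ :=
  genericity (sectionCubic (C ∘ p) fun d => X (1, d)) (sectionCubic (C ∘ p) fun d => X (0, d))

theorem eval_genericityPoly (p : Fin 3 → ℂ) (α : Fin 2 → DIdx → ℂ) :
    eval (fun q => α q.1 q.2) (genericityPoly p) =
      genericity (sectionCubic p (α 1)) (sectionCubic p (α 0)) := by
  simp only [genericityPoly, map_genericity, map_sectionCubic, Function.comp_def, eval_C,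
    eval_X]

theorem genericityPoly_ne_zero {p : Fin 3 → ℂ} (hp : p 2 ≠ 0) : genericityPoly p ≠ 0 := by
  intro h
  -- the two forms restrict to the cubics `p₂ (λ³ - 1)` and `p₂`
  let α : Fin 2 → DIdx → ℂ := ![Pi.single ⟨2, 0⟩ 1, Pi.single ⟨2, 3⟩ 1 - Pi.single ⟨2, 0⟩ 1]
  have h₀ := congrArg (eval fun q => α q.1 q.2) h
  rw [eval_genericityPoly] at h₀
  have h1 : sectionCubic p (α 1) = ⟨p 2, 0, 0, -p 2⟩ := by
    ext <;> simp +decide [α, sectionCubic]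
  have h0 : sectionCubic p (α 0) = ⟨0, 0, 0, p 2⟩ := by
    ext <;> simp +decide [α, sectionCubic]
  rw [h1, h0, genericity, Cubic.of_c_eq_zero', Polynomial.resultant_C_right, Cubic.coeff_eq_a]
    at h₀
  simp [Cubic.discr, hp] at h₀

theorem eq_of_smul_distMap_eq {p : Fin 3 → ℂ} {t t' lam lam' : ℂ}
    (h : t • distMap p lam = t' • distMap p lam') (ht : t * p 2 ≠ 0) : lam = lam' := by
  have h₀ : t * p 2 = t' * p 2 := by simpa [distMap_eq_distLin] using congrFun h ⟨2, 0⟩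
  have h₁ : t * p 2 * lam = t' * p 2 * lam' := by
    simpa [distMap_eq_distLin, mul_assoc] using congrFun h ⟨2, (1 : Fin 4)⟩
  rw [h₀] at h₁ ht
  exact mul_left_cancel₀ ht h₁

theorem setOf_mem_ptDist_section_eq_image {p : Fin 3 → ℂ} (hp : p 2 ≠ 0) {α : Fin 2 → DIdx → ℂ}
    (ha : (sectionCubic p (α 1)).a ≠ 0)
    (hcoprime : ∀ lam, (sectionCubic p (α 1)).toPoly.IsRoot lam →
      (sectionCubic p (α 0)).toPoly.eval lam ≠ 0) :
    {z | z ∈ ptDist p ∧ ∑ c, α 0 c * z c = 1 ∧ ∀ i : Fin (1 + 1), i ≠ 0 → ∑ c, α i c * z c = 0} =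
      (fun lam => ((sectionCubic p (α 0)).toPoly.eval lam)⁻¹ • distMap p lam) ''
        {lam | (sectionCubic p (α 1)).toPoly.IsRoot lam} := by
  ext z
  constructor
  · rintro ⟨hz, h₀, h₁⟩
    replace h₁ := h₁ 1 one_ne_zero
    rcases mem_ptDist_cases hp hz with ⟨t, lam, rfl⟩ | ⟨s, rfl⟩
    · rw [sum_mul_smul_distMap] at h₀ h₁
      have hroot : (sectionCubic p (α 1)).toPoly.IsRoot lam :=
        (mul_eq_zero.mp h₁).resolve_left (left_ne_zero_of_mul_eq_one h₀)
      exact ⟨lam, hroot, by rw [eq_inv_of_mul_eq_one_left h₀]⟩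
    · rw [sum_mul_smul_distLin_top] at h₀ h₁
      rw [(mul_eq_zero.mp h₁).resolve_right ha, zero_mul] at h₀
      exact absurd h₀ zero_ne_one
  · rintro ⟨lam, hroot, rfl⟩
    refine ⟨smul_distMap_mem_ptDist p _ lam, ?_, fun i hi => ?_⟩
    · rw [sum_mul_smul_distMap, inv_mul_cancel₀ (hcoprime lam hroot)]
    · rw [Fin.eq_one_of_ne_zero i hi, sum_mul_smul_distMap, hroot.eq_zero, mul_zero]

theorem ncard_section_eq_three {p : Fin 3 → ℂ} (hp : p 2 ≠ 0) {α : Fin 2 → DIdx → ℂ}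
    (hα : genericity (sectionCubic p (α 1)) (sectionCubic p (α 0)) ≠ 0) :
    {z | z ∈ ptDist p ∧ ∑ c, α 0 c * z c = 1 ∧
      ∀ i : Fin (1 + 1), i ≠ 0 → ∑ c, α i c * z c = 0}.ncard = 3 := by
  obtain ⟨⟨ha, hdisc⟩, hres⟩ := (mul_ne_zero_iff.mp hα).imp_left mul_ne_zero_iff.mp
  have hcoprime : ∀ lam, (sectionCubic p (α 1)).toPoly.IsRoot lam →
      (sectionCubic p (α 0)).toPoly.eval lam ≠ 0 := fun lam h₁ h₀ =>
    hres <| Polynomial.resultant_eq_zero_of_isRoot Polynomial.natDegree_cubic_le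
      Polynomial.natDegree_cubic_le (.inl three_ne_zero) h₁ h₀
  have hinj : Set.InjOn (fun lam => ((sectionCubic p (α 0)).toPoly.eval lam)⁻¹ • distMap p lam)
      {lam | (sectionCubic p (α 1)).toPoly.IsRoot lam} := fun lam hlam _ _ h =>
    eq_of_smul_distMap_eq h (mul_ne_zero (inv_ne_zero (hcoprime lam hlam)) hp)
  rw [setOf_mem_ptDist_section_eq_image hp ha hcoprime, hinj.ncard_image,
    Cubic.ncard_setOf_isRoot ha hdisc]

/-- For a point `p = (a₀ : b₀ : c₀) ∈ ℙ²` with `c₀ ≠ 0` and `u = (1,2,3)`, the distortion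
variety `X_{[u]}` is a curve of degree `3` in `ℙ⁸`, contained in a `ℙ³` (i.e. its cone is
contained in a `4`-dimensional linear subspace): a rational normal cubic curve. -/
theorem point_distortion_cubic (p : Fin 3 → ℂ) (hp : p 2 ≠ 0) :
    hasDegree 1 (ptDist p) 3 ∧
    ∃ W : Submodule ℂ (DIdx → ℂ), Module.finrank ℂ W = 4 ∧ ptDist p ⊆ W :=
  ⟨⟨genericityPoly p, genericityPoly_ne_zero hp, fun α hα =>
      ncard_section_eq_three hp (by rwa [eval_genericityPoly] at hα)⟩,
    LinearMap.range (distLin p), finrank_range_distLin hp, ptDist_subset_range_distLin hp⟩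
end
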